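/- arXiv:2402.09129 — 6 statements merged into one kernel-verified Lean document; each statement's English description precedes it below -/
import Mathlib

section
/- For a single good with trader value x uniform on [0,1], market maker belief c ∈ [0,1], and linear belief update π(c,x) = λc + (1−λ)x with λ ∈ [0,1], the mechanism that sells one unit at price (1 + λc)/(λ+1) (trader buys iff x exceeds this price) and buys one unit at price λc/(λ+1) (trader sells iff x is below this price) yields expected profit ∫₀¹ (a(x)(x − π(c,x)) − u(x)) dx = (2(c−1)c + 1)λ²/(2(λ+1)), where a(x) ∈ {−1,0,1} is the allocation and u(x) is the trader's utility from truthful participation. -/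
/-!
Below the bid price `s = λc/(λ+1)` the trader sells and his surplus `s - x` cancels the `x` in
the market maker's loss, leaving the affine profit `π(c,x) - s`; symmetrically above the ask
price `b = (1+λc)/(λ+1)` the profit is `b - π(c,x)`, and in between nothing trades. So the
integral is the sum of two integrals of affine functions over `[0,s]` and `[b,1]`.
-/

open MeasureTheory Set

theorem intervalIntegral.integral_eq_add_add_of_eqOn_Ioo {E : Type*} [NormedAddCommGroup E]
    [NormedSpace ℝ E] {μ : Measure ℝ} [NullSingletonClass μ] {f g₁ g₂ g₃ : ℝ → E}
    {a b c d : ℝ} (hab : a ≤ b) (hbc : b ≤ c) (hcd : c ≤ d)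
    (h₁ : EqOn f g₁ (Ioo a b)) (h₂ : EqOn f g₂ (Ioo b c)) (h₃ : EqOn f g₃ (Ioo c d))
    (hg₁ : IntervalIntegrable g₁ μ a b) (hg₂ : IntervalIntegrable g₂ μ b c)
    (hg₃ : IntervalIntegrable g₃ μ c d) :
    ∫ x in a..d, f x ∂μ =
      (∫ x in a..b, g₁ x ∂μ) + (∫ x in b..c, g₂ x ∂μ) + ∫ x in c..d, g₃ x ∂μ := by
  have hf₁ : IntervalIntegrable f μ a b := hg₁.congr_uIoo (uIoo_of_le hab ▸ h₁.symm)
  have hf₂ : IntervalIntegrable f μ b c := hg₂.congr_uIoo (uIoo_of_le hbc ▸ h₂.symm)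
  have hf₃ : IntervalIntegrable f μ c d := hg₃.congr_uIoo (uIoo_of_le hcd ▸ h₃.symm)
  rw [← integral_add_adjacent_intervals (hf₁.trans hf₂) hf₃,
    ← integral_add_adjacent_intervals hf₁ hf₂, integral_congr_Ioo_of_le hab h₁,
    integral_congr_Ioo_of_le hbc h₂, integral_congr_Ioo_of_le hcd h₃]

theorem intervalIntegral.integral_const_add_mul_id (r q a b : ℝ) :
    ∫ x in a..b, (r + q * x) = r * (b - a) + q * (b ^ 2 - a ^ 2) / 2 := by
  rw [integral_add intervalIntegrable_const (intervalIntegrable_id.const_mul q),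
    integral_const, integral_const_mul, integral_id, smul_eq_mul]
  ring

section Mechanism

variable {bid ask x p : ℝ}

theorem profit_eq_of_lt_bid (hbid : bid ≤ ask) (hx : x < bid) :
    (if x > ask then 1 else if x < bid then -1 else 0) * (x - p)
      - max (max (x - ask) (bid - x)) 0 = p - bid := by
  rw [if_neg (by linarith), if_pos hx, max_eq_right (show x - ask ≤ bid - x by linarith),
    max_eq_left (show 0 ≤ bid - x by linarith)]
  ring

theorem profit_eq_zero_of_mem_Ioo (hx : x ∈ Ioo bid ask) :
    (if x > ask then 1 else if x < bid then -1 else 0) * (x - p)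
      - max (max (x - ask) (bid - x)) 0 = 0 := by
  rw [if_neg (by linarith [hx.2]), if_neg (by linarith [hx.1]),
    max_eq_right (max_le (by linarith [hx.2]) (by linarith [hx.1]))]
  ring

theorem profit_eq_of_ask_lt (hbid : bid ≤ ask) (hx : ask < x) :
    (if x > ask then 1 else if x < bid then -1 else 0) * (x - p)
      - max (max (x - ask) (bid - x)) 0 = ask - p := by
  rw [if_pos hx, max_eq_left (show bid - x ≤ x - ask by linarith),
    max_eq_left (show 0 ≤ x - ask by linarith)]
  ring

end Mechanism

theorem stmt_5 (lam c : ℝ) (hlam : lam ∈ Set.Icc (0:ℝ) 1) (hc : c ∈ Set.Icc (0:ℝ) 1)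
    (a : ℝ → ℝ)
    (ha : a = fun x => if x > (1 + lam*c)/(lam + 1) then 1
      else if x < lam*c/(lam + 1) then -1 else 0)
    (u : ℝ → ℝ)
    (hu : u = fun x => max (max (x - (1 + lam*c)/(lam + 1)) (lam*c/(lam + 1) - x)) 0) :
    ∫ x in (0:ℝ)..1, (a x * (x - (lam*c + (1 - lam)*x)) - u x)
      = (2*(c - 1)*c + 1)*lam^2 / (2*(lam + 1)) := by
  obtain ⟨hlam₀, -⟩ := hlam
  obtain ⟨hc₀, hc₁⟩ := hc
  subst ha hu
  beta_reduce
  set s := lam * c / (lam + 1)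
  set b := (1 + lam * c) / (lam + 1)
  have hs : 0 ≤ s := by positivity
  have hsb : s ≤ b := div_le_div_of_nonneg_right (by linarith) (by linarith)
  have hb : b ≤ 1 := (div_le_one (by linarith)).2 (by nlinarith)
  rw [intervalIntegral.integral_eq_add_add_of_eqOn_Ioo hs hsb hb
      (g₁ := fun x => (lam * c - s) + (1 - lam) * x) (g₂ := fun _ => 0)
      (g₃ := fun x => (b - lam * c) + (lam - 1) * x)
      (fun x hx => by rw [profit_eq_of_lt_bid hsb hx.2]; ring)
      (fun x hx => profit_eq_zero_of_mem_Ioo hx)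
      (fun x hx => by rw [profit_eq_of_ask_lt hsb hx.1]; ring)
      ((by fun_prop : Continuous _).intervalIntegrable _ _)
      intervalIntegrable_const ((by fun_prop : Continuous _).intervalIntegrable _ _)]
  simp only [intervalIntegral.integral_const_add_mul_id, intervalIntegral.integral_zero]
  simp only [s, b]
  field_simp
  ring
end

section
/- For one good with uniform distribution, c ∈ [0,1], λ ∈ [0,1], define two CDFs on ℝ: C_{γ₂}(x) = (1+λ)x for x ∈ [0,1] (0 below, 1+λ above), and C_{γ₁} given piecewise by: 0 for x < 0; cλ for 0 ≤ x < cλ/(λ+1); cλ + (λ+1)(x − cλ/(λ+1)) for cλ/(λ+1) ≤ x < (cλ+1)/(λ+1); cλ + 1 for (cλ+1)/(λ+1) ≤ x < 1; and λ+1 for x ≥ 1. Then ∫_{−∞}^{∞} |C_{γ₁}(x) − C_{γ₂}(x)| dx = (2(c−1)c + 1)λ²/(2(λ+1)). -/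
/-!
Both CDFs are `λ + 1` times CDFs of probability measures: `C₂` of the uniform one on `[0, 1]`,
`C₁` of `splitCDF a b` with `a = cλ/(λ+1)` and `b = (cλ+1)/(λ+1)`. These two agree outside
`[0, a) ∪ [b, 1)`, and on those intervals their difference is a triangle with legs `a` and `1 - b`
respectively, so the integral is `(λ + 1)(a² + (1 - b)²)/2 = (c² + (1 - c)²)λ²/(2(λ + 1))`.
-/
open MeasureTheory Set

theorem integral_indicator_Ico_sub_left {a b : ℝ} (hab : a ≤ b) :
    ∫ x, (Ico a b).indicator (fun x => b - x) x = (b - a) ^ 2 / 2 := by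
  rw [integral_indicator measurableSet_Ico, setIntegral_congr_set Ico_ae_eq_Ioc,
    ← intervalIntegral.integral_of_le hab, intervalIntegral.integral_comp_sub_left (fun x => x)]
  simp

theorem integral_indicator_Ico_sub_right {a b : ℝ} (hab : a ≤ b) :
    ∫ x, (Ico a b).indicator (fun x => x - a) x = (b - a) ^ 2 / 2 := by
  rw [integral_indicator measurableSet_Ico, setIntegral_congr_set Ico_ae_eq_Ioc,
    ← intervalIntegral.integral_of_le hab, intervalIntegral.integral_comp_sub_right (fun x => x)]
  simp

theorem integrable_indicator_Ico_of_continuous {f : ℝ → ℝ} (hf : Continuous f) (a b : ℝ) :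
    Integrable ((Ico a b).indicator f) :=
  (hf.integrableOn_Icc.mono_set Ico_subset_Icc_self).integrable_indicator measurableSet_Ico

noncomputable def uniformCDF (x : ℝ) : ℝ := if x < 0 then 0 else if x ≤ 1 then x else 1

/-- The CDF of the probability measure with an atom of mass `a` at `0`, an atom of mass `1 - b`
at `1`, and Lebesgue measure on `[a, b]`. -/
noncomputable def splitCDF (a b x : ℝ) : ℝ :=
  if x < 0 then 0 else if x < a then a else if x < b then x else if x < 1 then b else 1

theorem abs_splitCDF_sub_uniformCDF {a b : ℝ} (ha : 0 ≤ a) (hab : a ≤ b) (hb : b ≤ 1) (x : ℝ) :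
    |splitCDF a b x - uniformCDF x|
      = (Ico 0 a).indicator (fun x => a - x) x + (Ico b 1).indicator (fun x => x - b) x := by
  simp only [splitCDF, uniformCDF, indicator_apply, mem_Ico]
  grind

theorem integral_abs_splitCDF_sub_uniformCDF {a b : ℝ} (ha : 0 ≤ a) (hab : a ≤ b) (hb : b ≤ 1) :
    ∫ x, |splitCDF a b x - uniformCDF x| = a ^ 2 / 2 + (1 - b) ^ 2 / 2 := by
  simp_rw [abs_splitCDF_sub_uniformCDF ha hab hb]
  rw [integral_add (integrable_indicator_Ico_of_continuous (by fun_prop) _ _)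
      (integrable_indicator_Ico_of_continuous (by fun_prop) _ _),
    integral_indicator_Ico_sub_left ha, integral_indicator_Ico_sub_right hb]
  ring

theorem stmt_7 (lam c : ℝ) (hlam : lam ∈ Set.Icc (0:ℝ) 1) (hc : c ∈ Set.Icc (0:ℝ) 1)
    (C₁ C₂ : ℝ → ℝ)
    (hC₂ : C₂ = fun x => if x < 0 then 0 else if x ≤ 1 then (1 + lam)*x else 1 + lam)
    (hC₁ : C₁ = fun x =>
      if x < 0 then 0
      else if x < c*lam/(lam + 1) then c*lam
      else if x < (c*lam + 1)/(lam + 1) then c*lam + (lam + 1)*(x - c*lam/(lam + 1))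
      else if x < 1 then c*lam + 1
      else lam + 1) :
    ∫ x : ℝ, |C₁ x - C₂ x| = (2*(c - 1)*c + 1)*lam^2 / (2*(lam + 1)) := by
  obtain ⟨hlam₀, -⟩ := hlam
  obtain ⟨hc₀, hc₁⟩ := hc
  have hk : 0 < lam + 1 := by linarith
  set a := c * lam / (lam + 1)
  set b := (c * lam + 1) / (lam + 1)
  have hC₁' : ∀ x, C₁ x = (lam + 1) * splitCDF a b x := by
    intro x
    simp only [hC₁, splitCDF, a, b]
    split_ifs <;> field_simp <;> ring
  have hC₂' : ∀ x, C₂ x = (lam + 1) * uniformCDF x := by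
    intro x
    simp only [hC₂, uniformCDF]
    split_ifs <;> ring
  have ha : 0 ≤ a := by positivity
  have hab : a ≤ b := div_le_div_of_nonneg_right (by linarith) hk.le
  have hb : b ≤ 1 := by rw [div_le_one hk]; nlinarith
  calc ∫ x, |C₁ x - C₂ x| = ∫ x, (lam + 1) * |splitCDF a b x - uniformCDF x| := by
        simp_rw [hC₁', hC₂', ← mul_sub, abs_mul, abs_of_pos hk]
    _ = (lam + 1) * (a ^ 2 / 2 + (1 - b) ^ 2 / 2) := by
        rw [integral_const_mul, integral_abs_splitCDF_sub_uniformCDF ha hab hb]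
    _ = (2*(c - 1)*c + 1)*lam^2 / (2*(lam + 1)) := by
        simp only [a, b]
        field_simp
        ring
end

section
/- The system of equations (1−2a)/2 − 3(1−2a)b = 0, b/2 − 3(a−b)²/2 = 0, a−b)/2 − 3(a−b)b = 0 (i.e., (a−b)/2 = 3(a−b)b), together with the constraints 0 < b < a < 1/2, has the unique solution a = (1+√2)/6, b = 1/6. -/
theorem stmt_8 (a b : ℝ) (hb : 0 < b) (hba : b < a) (ha : a < 1/2)
    (h1 : (1 - 2*a)/2 - 3*(1 - 2*a)*b = 0)
    (h2 : b/2 - 3*(a - b)^2/2 = 0)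
    (h3 : (a - b)/2 - 3*(a - b)*b = 0) :
    a = (1 + Real.sqrt 2)/6 ∧ b = 1/6 := by
  have hab : a - b ≠ 0 := by linarith
  have hb6 : b = 1/6 := by
    have : (a - b) * (1/2 - 3*b) = 0 := by ring_nf; linarith [h3]
    rcases mul_eq_zero.1 this with h | h
    · exact absurd h hab
    · linarith
  subst hb6
  have hs2 : Real.sqrt 2 ^ 2 = 2 := Real.sq_sqrt (by norm_num)
  have hsq : (a - 1/6)^2 = (Real.sqrt 2 / 6)^2 := by
    have h2' : (a - 1/6)^2 = 1/18 := by linarith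
    rw [h2', div_pow, hs2]; norm_num
  have hpos : a - 1/6 > 0 := by linarith
  have hs : Real.sqrt 2 / 6 > 0 := by positivity
  have key : a - 1/6 = Real.sqrt 2 / 6 := by
    nlinarith [sq_nonneg (a - 1/6 - Real.sqrt 2/6), sq_nonneg (a - 1/6 + Real.sqrt 2/6)]
  exact ⟨by linarith, rfl⟩
end

section
/- For λ ∈ (0,1], the system λ(1−2a)/2 − (2λ+1)(1−2a)b = 0, λb/2 − (2λ+1)(a−b)²/2 = 0, λa/2 − (2λ+1)ab = 0, with constraints 0 < b < a < 1/2, has unique solution a_λ = (1+√2)λ/(4λ+2) and b_λ = λ/(4λ+2). -/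
/-! Equation `h3` is `a (λ - (4λ+2) b) = 0`, so `a ≠ 0` forces `b = λ/(4λ+2)`, i.e. `λ = (4λ+2) b`.
Substituting this into `h2` turns it into `(a - b)² = 2 b²`, and `a > b > 0` then gives
`a - b = √2 b`, so `a = (1 + √2) b`. -/

lemma eq_div_of_mul_sub_mul_eq_zero {lam a b : ℝ} (hL : 2 * lam + 1 ≠ 0) (ha : a ≠ 0)
    (h : lam * a / 2 - (2 * lam + 1) * a * b = 0) : b = lam / (4 * lam + 2) := by
  have hfac : a * (lam - (4 * lam + 2) * b) = 0 := by linear_combination 2 * h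
  have hL' : 4 * lam + 2 ≠ 0 := by contrapose! hL; linarith
  rw [eq_div_iff hL']
  linear_combination -((mul_eq_zero.mp hfac).resolve_left ha)

lemma sq_sub_eq_two_mul_sq {lam a b : ℝ} (hL : 2 * lam + 1 ≠ 0) (hb : lam = (4 * lam + 2) * b)
    (h : lam * b / 2 - (2 * lam + 1) * (a - b) ^ 2 / 2 = 0) : (a - b) ^ 2 = 2 * b ^ 2 := by
  have hmul : (2 * lam + 1) * ((a - b) ^ 2 - 2 * b ^ 2) = 0 := by
    linear_combination -2 * h + b * hb
  linear_combination (mul_eq_zero.mp hmul).resolve_left hL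

lemma eq_sqrt_two_mul_of_sq_eq {x y : ℝ} (hx : 0 ≤ x) (hy : 0 ≤ y) (h : x ^ 2 = 2 * y ^ 2) :
    x = √2 * y := by
  rw [← pow_left_inj₀ hx (by positivity) two_ne_zero, h, mul_pow, Real.sq_sqrt zero_le_two]

theorem stmt_10_general (lam a b : ℝ) (hlam : lam ∈ Set.Ioc (0:ℝ) 1)
    (hb : 0 < b) (hba : b < a)
    (h2 : lam*b/2 - (2*lam + 1)*(a - b)^2/2 = 0)
    (h3 : lam*a/2 - (2*lam + 1)*a*b = 0) :
    a = (1 + Real.sqrt 2)*lam/(4*lam + 2) ∧ b = lam/(4*lam + 2) := by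
  have hL : 2 * lam + 1 ≠ 0 := by linarith [hlam.1]
  have hb_eq : b = lam / (4 * lam + 2) :=
    eq_div_of_mul_sub_mul_eq_zero hL (hb.trans hba).ne' h3
  have hlam_eq : lam = (4 * lam + 2) * b := by
    rw [hb_eq, mul_div_cancel₀ _ (by linarith [hlam.1])]
  have hdiff : a - b = √2 * b :=
    eq_sqrt_two_mul_of_sq_eq (by linarith) hb.le (sq_sub_eq_two_mul_sq hL hlam_eq h2)
  refine ⟨?_, hb_eq⟩
  rw [mul_div_assoc, ← hb_eq]
  linear_combination hdiff

theorem stmt_10 (lam a b : ℝ) (hlam : lam ∈ Set.Ioc (0:ℝ) 1)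
    (hb : 0 < b) (hba : b < a) (ha : a < 1/2)
    (h1 : lam*(1 - 2*a)/2 - (2*lam + 1)*(1 - 2*a)*b = 0)
    (h2 : lam*b/2 - (2*lam + 1)*(a - b)^2/2 = 0)
    (h3 : lam*a/2 - (2*lam + 1)*a*b = 0) :
    a = (1 + Real.sqrt 2)*lam/(4*lam + 2) ∧ b = lam/(4*lam + 2) :=
  stmt_10_general lam a b hlam hb hba h2 h3
end

section
/- For the menu {((1,0), 5/6), ((0,1), 5/6), ((−1,0), −1/6), ((0,−1), −1/6), ((1,1), (10−√2)/6), ((−1,−1), (−2−√2)/6), ((1,−1), (4−√2)/6), ((−1,1), (4−√2)/6), ((0,0), 0)}, the expected market-maker profit ∫_{[0,1]²} p(x) dx — where for each type x the trader selects the menu item (a,p) maximizing a·x − p, and the profit collected is p — equals (6+√2)/27. -/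
open MeasureTheory Set

noncomputable def mmq : ℝ := Real.sqrt 2

lemma mmq_gt : 1.41 < mmq := by
  rw [mmq, show (1.41:ℝ) = Real.sqrt (1.41^2) by rw [Real.sqrt_sq]; norm_num]
  exact Real.sqrt_lt_sqrt (by norm_num) (by norm_num)

lemma mmq_lt : mmq < 1.42 := by
  rw [mmq, show (1.42:ℝ) = Real.sqrt (1.42^2) by rw [Real.sqrt_sq]; norm_num]
  exact Real.sqrt_lt_sqrt (by norm_num) (by norm_num)

lemma mmq_sq : mmq^2 = 2 := Real.sq_sqrt (by norm_num)

lemma integ_Ioo_const {f : ℝ → ℝ} {a b c : ℝ} (hab : a ≤ b)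
    (h : ∀ y ∈ Set.Ioo a b, f y = c) : ∫ y in a..b, f y = (b - a) * c := by
  have : ∫ y in a..b, f y = ∫ _ in a..b, c := by
    apply intervalIntegral.integral_congr_ae
    have hb : ∀ᵐ y : ℝ, y ≠ b := by
      simpa [ae_iff] using measure_singleton (b : ℝ)
    filter_upwards [hb] with y hy hmem
    rw [Set.uIoc_of_le hab] at hmem
    exact h y ⟨hmem.1, lt_of_le_of_ne hmem.2 hy⟩
  rw [this, intervalIntegral.integral_const, smul_eq_mul]

lemma integ_Ioo_affine {f : ℝ → ℝ} {a b c d : ℝ} (hab : a ≤ b)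
    (h : ∀ y ∈ Set.Ioo a b, f y = c + d * y) :
    ∫ y in a..b, f y = c * (b - a) + d * (b^2 - a^2)/2 := by
  have : ∫ y in a..b, f y = ∫ y in a..b, (c + d * y) := by
    apply intervalIntegral.integral_congr_ae
    have hb : ∀ᵐ y : ℝ, y ≠ b := by
      simpa [ae_iff] using measure_singleton (b : ℝ)
    filter_upwards [hb] with y hy hmem
    rw [Set.uIoc_of_le hab] at hmem
    exact h y ⟨hmem.1, lt_of_le_of_ne hmem.2 hy⟩
  rw [this, intervalIntegral.integral_add intervalIntegrable_const
    ((intervalIntegral.intervalIntegrable_id).const_mul d), intervalIntegral.integral_const,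
    intervalIntegral.integral_const_mul, integral_id, smul_eq_mul]
  ring

lemma intervalIntegrable_of_bdd {f : ℝ → ℝ} {a b M : ℝ} (hf : Measurable f)
    (hM : ∀ y, y ∈ Set.uIcc a b → |f y| ≤ M) : IntervalIntegrable f volume a b := by
  rw [intervalIntegrable_iff]
  apply Measure.integrableOn_of_bounded (M := M)
  · exact measure_Ioc_lt_top.ne
  · exact hf.aestronglyMeasurable
  · refine (ae_restrict_iff' measurableSet_uIoc).2 (ae_of_all _ fun y hy => ?_)
    rw [Real.norm_eq_abs]
    exact hM y (Set.uIoc_subset_uIcc hy)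

lemma null_of_null_slices {s : Set (ℝ × ℝ)} (hs : MeasurableSet s)
    (h : ∀ᵐ x : ℝ, volume {y | (x, y) ∈ s} = 0) : volume s = 0 := by
  rw [Measure.volume_eq_prod]
  rw [Measure.measure_prod_null hs]
  exact h

open Classical in
noncomputable def mmg : ℝ × ℝ → ℝ := fun p =>
  if ((5 - mmq)/6 ≤ p.1 ∧ (5 - mmq)/6 ≤ p.2 ∧ (10 - mmq)/6 ≤ p.1 + p.2)
     ∨ (p.1 ≤ (1 + mmq)/6 ∧ p.2 ≤ (1 + mmq)/6 ∧ p.1 + p.2 ≤ (2 + mmq)/6)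
     ∨ ((5 - mmq)/6 ≤ p.1 ∧ p.2 ≤ (1 + mmq)/6 ∧ (4 - mmq)/6 ≤ p.1 - p.2)
     ∨ (p.1 ≤ (1 + mmq)/6 ∧ (5 - mmq)/6 ≤ p.2 ∧ (4 - mmq)/6 ≤ p.2 - p.1)
  then (4 - mmq)/6
  else if (5/6 ≤ p.1 ∧ (1 + mmq)/6 ≤ p.2 ∧ p.2 ≤ (5 - mmq)/6)
     ∨ (5/6 ≤ p.2 ∧ (1 + mmq)/6 ≤ p.1 ∧ p.1 ≤ (5 - mmq)/6)
     ∨ (p.1 ≤ 1/6 ∧ (1 + mmq)/6 ≤ p.2 ∧ p.2 ≤ (5 - mmq)/6)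
     ∨ (p.2 ≤ 1/6 ∧ (1 + mmq)/6 ≤ p.1 ∧ p.1 ≤ (5 - mmq)/6)
  then 1/3 else 0

lemma mmg_measurable : Measurable mmg := by
  have h1 : Measurable (fun p : ℝ × ℝ => p.1) := measurable_fst
  have h2 : Measurable (fun p : ℝ × ℝ => p.2) := measurable_snd
  apply Measurable.ite
  · exact (((measurableSet_le measurable_const h1).inter
      ((measurableSet_le measurable_const h2).inter
        (measurableSet_le measurable_const (h1.add h2)))).union
      (((measurableSet_le h1 measurable_const).inter
      ((measurableSet_le h2 measurable_const).inter
        (measurableSet_le (h1.add h2) measurable_const))).union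
      (((measurableSet_le measurable_const h1).inter
      ((measurableSet_le h2 measurable_const).inter
        (measurableSet_le measurable_const (h1.sub h2)))).union
      ((measurableSet_le h1 measurable_const).inter
      ((measurableSet_le measurable_const h2).inter
        (measurableSet_le measurable_const (h2.sub h1)))))))
  · exact measurable_const
  apply Measurable.ite
  · exact (((measurableSet_le measurable_const h1).inter
      ((measurableSet_le measurable_const h2).inter
        (measurableSet_le h2 measurable_const))).union
      (((measurableSet_le measurable_const h2).inter
      ((measurableSet_le measurable_const h1).inter
        (measurableSet_le h1 measurable_const))).union
      (((measurableSet_le h1 measurable_const).inter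
      ((measurableSet_le measurable_const h2).inter
        (measurableSet_le h2 measurable_const))).union
      ((measurableSet_le h2 measurable_const).inter
      ((measurableSet_le measurable_const h1).inter
        (measurableSet_le h1 measurable_const))))))
  · exact measurable_const
  · exact measurable_const

lemma mmg_bound (p : ℝ × ℝ) : |mmg p| ≤ 1 := by
  have h1 := mmq_gt; have h2 := mmq_lt
  unfold mmg
  split_ifs <;> rw [abs_le] <;> constructor <;> norm_num <;> linarith

noncomputable def mmphi : ℝ → ℝ := fun x =>
  if x ≤ 1/6 then (4 - mmq)/3 * ((1 + mmq)/6) + (4 - 2*mmq)/18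
  else if x ≤ (1 + mmq)/6 then (4 - mmq)/6 * ((2 + mmq)/3) - (4 - mmq)/3 * x
  else if x ≤ (5 - mmq)/6 then 1/9
  else if x ≤ 5/6 then (4 - mmq)/3 * x - (4 - mmq)^2/18
  else (4 - mmq)/3 * ((1 + mmq)/6) + (4 - 2*mmq)/18

lemma mmphi_measurable : Measurable mmphi := by
  apply Measurable.ite measurableSet_Iic measurable_const
  apply Measurable.ite measurableSet_Iic
  · exact (measurable_const.sub (measurable_id.const_mul _))
  apply Measurable.ite measurableSet_Iic measurable_const
  apply Measurable.ite measurableSet_Iic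
  · exact ((measurable_id.const_mul _).sub measurable_const)
  · exact measurable_const

lemma mmphi_bound (x : ℝ) (hx : x ∈ Set.uIcc (0:ℝ) 1) : |mmphi x| ≤ 10 := by
  have h1 := mmq_gt; have h2 := mmq_lt
  rw [Set.uIcc_of_le (by norm_num)] at hx
  obtain ⟨hx0, hx1⟩ := hx
  unfold mmphi
  split_ifs <;> rw [abs_le] <;> constructor <;> nlinarith

lemma line_vert_null (c : ℝ) : volume {p : ℝ × ℝ | p.1 = c} = 0 := by
  apply null_of_null_slices
  · exact (measurable_fst (measurableSet_singleton c))
  · have : ∀ᵐ x : ℝ, x ≠ c := by simpa [ae_iff] using measure_singleton c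
    filter_upwards [this] with x hx
    simp [hx]

lemma line_horiz_null (c : ℝ) : volume {p : ℝ × ℝ | p.2 = c} = 0 := by
  apply null_of_null_slices
  · exact (measurable_snd (measurableSet_singleton c))
  · refine ae_of_all _ fun x => ?_
    have : {y : ℝ | (x, y) ∈ {p : ℝ × ℝ | p.2 = c}} = {c} := by ext y; simp
    rw [this]; exact measure_singleton c

lemma line_sum_null (c : ℝ) : volume {p : ℝ × ℝ | p.1 + p.2 = c} = 0 := by
  apply null_of_null_slices
  · exact ((measurable_fst.add measurable_snd) (measurableSet_singleton c))
  · refine ae_of_all _ fun x => ?_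
    have : {y : ℝ | (x, y) ∈ {p : ℝ × ℝ | p.1 + p.2 = c}} = {c - x} := by
      ext y; constructor <;> intro h <;> simp at * <;> linarith
    rw [this]; exact measure_singleton _

lemma line_diff_null (c : ℝ) : volume {p : ℝ × ℝ | p.1 - p.2 = c} = 0 := by
  apply null_of_null_slices
  · exact ((measurable_fst.sub measurable_snd) (measurableSet_singleton c))
  · refine ae_of_all _ fun x => ?_
    have : {y : ℝ | (x, y) ∈ {p : ℝ × ℝ | p.1 - p.2 = c}} = {x - c} := by
      ext y; constructor <;> intro h <;> simp at * <;> linarith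
    rw [this]; exact measure_singleton _

lemma line_diff2_null (c : ℝ) : volume {p : ℝ × ℝ | p.2 - p.1 = c} = 0 := by
  apply null_of_null_slices
  · exact ((measurable_snd.sub measurable_fst) (measurableSet_singleton c))
  · refine ae_of_all _ fun x => ?_
    have : {y : ℝ | (x, y) ∈ {p : ℝ × ℝ | p.2 - p.1 = c}} = {x + c} := by
      ext y; constructor <;> intro h <;> simp at * <;> linarith
    rw [this]; exact measure_singleton _

lemma mm_inner_integrable (x u v : ℝ) :
    IntervalIntegrable (fun y => mmg (x, y)) volume u v :=
  intervalIntegrable_of_bdd (mmg_measurable.comp (measurable_const.prodMk measurable_id))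
    (fun y _ => mmg_bound _)

lemma mm_base (x : ℝ) : ∫ y in Set.Icc (0:ℝ) 1, mmg (x, y) = ∫ y in (0:ℝ)..1, mmg (x, y) := by
  rw [intervalIntegral.integral_of_le (by norm_num), integral_Icc_eq_integral_Ioc]

lemma inner1 (x : ℝ) (hl : 0 < x) (hr : x < 1/6) :
    ∫ y in Set.Icc (0:ℝ) 1, mmg (x, y) = mmphi x := by
  have h1 := mmq_gt; have h2 := mmq_lt
  rw [mm_base,
    ← intervalIntegral.integral_add_adjacent_intervals (mm_inner_integrable x 0 ((1+mmq)/6))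
      (mm_inner_integrable x ((1+mmq)/6) 1),
    ← intervalIntegral.integral_add_adjacent_intervals (mm_inner_integrable x ((1+mmq)/6) ((5-mmq)/6))
      (mm_inner_integrable x ((5-mmq)/6) 1)]
  have p1 : ∫ y in (0:ℝ)..((1+mmq)/6), mmg (x, y) = ((1+mmq)/6 - 0) * ((4-mmq)/6) := by
    apply integ_Ioo_const (by linarith)
    intro y hy; obtain ⟨hy0, hy1⟩ := hy
    unfold mmg
    rw [if_pos (Or.inr (Or.inl ⟨by linarith, by linarith, by linarith⟩))]
  have p2 : ∫ y in ((1+mmq)/6)..((5-mmq)/6), mmg (x, y) = ((5-mmq)/6 - (1+mmq)/6) * (1/3) := by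
    apply integ_Ioo_const (by linarith)
    intro y hy; obtain ⟨hy0, hy1⟩ := hy
    unfold mmg
    rw [if_neg, if_pos (Or.inr (Or.inr (Or.inl ⟨by linarith, by linarith, by linarith⟩)))]
    rintro (⟨c1,c2,c3⟩|⟨c1,c2,c3⟩|⟨c1,c2,c3⟩|⟨c1,c2,c3⟩) <;> linarith
  have p3 : ∫ y in ((5-mmq)/6)..(1:ℝ), mmg (x, y) = (1 - (5-mmq)/6) * ((4-mmq)/6) := by
    apply integ_Ioo_const (by linarith)
    intro y hy; obtain ⟨hy0, hy1⟩ := hy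
    unfold mmg
    rw [if_pos (Or.inr (Or.inr (Or.inr ⟨by linarith, by linarith, by linarith⟩)))]
  rw [p1, p2, p3]
  unfold mmphi
  rw [if_pos (by linarith : x ≤ 1/6)]
  ring

lemma inner2 (x : ℝ) (hl : 1/6 < x) (hr : x < (1+mmq)/6) :
    ∫ y in Set.Icc (0:ℝ) 1, mmg (x, y) = mmphi x := by
  have h1 := mmq_gt; have h2 := mmq_lt
  rw [mm_base,
    ← intervalIntegral.integral_add_adjacent_intervals (mm_inner_integrable x 0 ((2+mmq)/6 - x))
      (mm_inner_integrable x ((2+mmq)/6 - x) 1),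
    ← intervalIntegral.integral_add_adjacent_intervals
      (mm_inner_integrable x ((2+mmq)/6 - x) (x + (4-mmq)/6))
      (mm_inner_integrable x (x + (4-mmq)/6) 1)]
  have p1 : ∫ y in (0:ℝ)..((2+mmq)/6 - x), mmg (x, y) = ((2+mmq)/6 - x - 0) * ((4-mmq)/6) := by
    apply integ_Ioo_const (by linarith)
    intro y hy; obtain ⟨hy0, hy1⟩ := hy
    unfold mmg
    rw [if_pos (Or.inr (Or.inl ⟨by linarith, by linarith, by linarith⟩))]
  have p2 : ∫ y in ((2+mmq)/6 - x)..(x + (4-mmq)/6), mmg (x, y) = (x + (4-mmq)/6 - ((2+mmq)/6 - x)) * 0 := by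
    apply integ_Ioo_const (by linarith)
    intro y hy; obtain ⟨hy0, hy1⟩ := hy
    unfold mmg
    rw [if_neg, if_neg]
    · rintro (⟨c1,c2,c3⟩|⟨c1,c2,c3⟩|⟨c1,c2,c3⟩|⟨c1,c2,c3⟩) <;> linarith
    · rintro (⟨c1,c2,c3⟩|⟨c1,c2,c3⟩|⟨c1,c2,c3⟩|⟨c1,c2,c3⟩) <;> linarith
  have p3 : ∫ y in (x + (4-mmq)/6)..(1:ℝ), mmg (x, y) = (1 - (x + (4-mmq)/6)) * ((4-mmq)/6) := by
    apply integ_Ioo_const (by linarith)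
    intro y hy; obtain ⟨hy0, hy1⟩ := hy
    unfold mmg
    rw [if_pos (Or.inr (Or.inr (Or.inr ⟨by linarith, by linarith, by linarith⟩)))]
  rw [p1, p2, p3]
  unfold mmphi
  rw [if_neg (by linarith : ¬ x ≤ 1/6), if_pos (by linarith : x ≤ (1+mmq)/6)]
  ring

lemma inner3 (x : ℝ) (hl : (1+mmq)/6 < x) (hr : x < (5-mmq)/6) :
    ∫ y in Set.Icc (0:ℝ) 1, mmg (x, y) = mmphi x := by
  have h1 := mmq_gt; have h2 := mmq_lt
  rw [mm_base,
    ← intervalIntegral.integral_add_adjacent_intervals (mm_inner_integrable x 0 (1/6))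
      (mm_inner_integrable x (1/6) 1),
    ← intervalIntegral.integral_add_adjacent_intervals (mm_inner_integrable x (1/6) (5/6))
      (mm_inner_integrable x (5/6) 1)]
  have p1 : ∫ y in (0:ℝ)..(1/6:ℝ), mmg (x, y) = ((1/6:ℝ) - 0) * (1/3) := by
    apply integ_Ioo_const (by norm_num)
    intro y hy; obtain ⟨hy0, hy1⟩ := hy
    unfold mmg
    rw [if_neg, if_pos (Or.inr (Or.inr (Or.inr ⟨by linarith, by linarith, by linarith⟩)))]
    rintro (⟨c1,c2,c3⟩|⟨c1,c2,c3⟩|⟨c1,c2,c3⟩|⟨c1,c2,c3⟩) <;> linarith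
  have p2 : ∫ y in (1/6:ℝ)..(5/6:ℝ), mmg (x, y) = ((5/6:ℝ) - 1/6) * 0 := by
    apply integ_Ioo_const (by norm_num)
    intro y hy; obtain ⟨hy0, hy1⟩ := hy
    unfold mmg
    rw [if_neg, if_neg]
    · rintro (⟨c1,c2,c3⟩|⟨c1,c2,c3⟩|⟨c1,c2,c3⟩|⟨c1,c2,c3⟩) <;> linarith
    · rintro (⟨c1,c2,c3⟩|⟨c1,c2,c3⟩|⟨c1,c2,c3⟩|⟨c1,c2,c3⟩) <;> linarith
  have p3 : ∫ y in (5/6:ℝ)..(1:ℝ), mmg (x, y) = ((1:ℝ) - 5/6) * (1/3) := by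
    apply integ_Ioo_const (by norm_num)
    intro y hy; obtain ⟨hy0, hy1⟩ := hy
    unfold mmg
    rw [if_neg, if_pos (Or.inr (Or.inl ⟨by linarith, by linarith, by linarith⟩))]
    rintro (⟨c1,c2,c3⟩|⟨c1,c2,c3⟩|⟨c1,c2,c3⟩|⟨c1,c2,c3⟩) <;> linarith
  rw [p1, p2, p3]
  unfold mmphi
  rw [if_neg (by linarith : ¬ x ≤ 1/6), if_neg (by linarith : ¬ x ≤ (1+mmq)/6),
    if_pos (by linarith : x ≤ (5-mmq)/6)]
  ring

lemma inner4 (x : ℝ) (hl : (5-mmq)/6 < x) (hr : x < 5/6) :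
    ∫ y in Set.Icc (0:ℝ) 1, mmg (x, y) = mmphi x := by
  have h1 := mmq_gt; have h2 := mmq_lt
  rw [mm_base,
    ← intervalIntegral.integral_add_adjacent_intervals (mm_inner_integrable x 0 (x - (4-mmq)/6))
      (mm_inner_integrable x (x - (4-mmq)/6) 1),
    ← intervalIntegral.integral_add_adjacent_intervals
      (mm_inner_integrable x (x - (4-mmq)/6) ((10-mmq)/6 - x))
      (mm_inner_integrable x ((10-mmq)/6 - x) 1)]
  have p1 : ∫ y in (0:ℝ)..(x - (4-mmq)/6), mmg (x, y) = (x - (4-mmq)/6 - 0) * ((4-mmq)/6) := by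
    apply integ_Ioo_const (by linarith)
    intro y hy; obtain ⟨hy0, hy1⟩ := hy
    unfold mmg
    rw [if_pos (Or.inr (Or.inr (Or.inl ⟨by linarith, by linarith, by linarith⟩)))]
  have p2 : ∫ y in (x - (4-mmq)/6)..((10-mmq)/6 - x), mmg (x, y) = ((10-mmq)/6 - x - (x - (4-mmq)/6)) * 0 := by
    apply integ_Ioo_const (by linarith)
    intro y hy; obtain ⟨hy0, hy1⟩ := hy
    unfold mmg
    rw [if_neg, if_neg]
    · rintro (⟨c1,c2,c3⟩|⟨c1,c2,c3⟩|⟨c1,c2,c3⟩|⟨c1,c2,c3⟩) <;> linarith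
    · rintro (⟨c1,c2,c3⟩|⟨c1,c2,c3⟩|⟨c1,c2,c3⟩|⟨c1,c2,c3⟩) <;> linarith
  have p3 : ∫ y in ((10-mmq)/6 - x)..(1:ℝ), mmg (x, y) = (1 - ((10-mmq)/6 - x)) * ((4-mmq)/6) := by
    apply integ_Ioo_const (by linarith)
    intro y hy; obtain ⟨hy0, hy1⟩ := hy
    unfold mmg
    rw [if_pos (Or.inl ⟨by linarith, by linarith, by linarith⟩)]
  rw [p1, p2, p3]
  unfold mmphi
  rw [if_neg (by linarith : ¬ x ≤ 1/6), if_neg (by linarith : ¬ x ≤ (1+mmq)/6),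
    if_neg (by linarith : ¬ x ≤ (5-mmq)/6), if_pos (by linarith : x ≤ 5/6)]
  ring

lemma inner5 (x : ℝ) (hl : 5/6 < x) (hr : x < 1) :
    ∫ y in Set.Icc (0:ℝ) 1, mmg (x, y) = mmphi x := by
  have h1 := mmq_gt; have h2 := mmq_lt
  rw [mm_base,
    ← intervalIntegral.integral_add_adjacent_intervals (mm_inner_integrable x 0 ((1+mmq)/6))
      (mm_inner_integrable x ((1+mmq)/6) 1),
    ← intervalIntegral.integral_add_adjacent_intervals (mm_inner_integrable x ((1+mmq)/6) ((5-mmq)/6))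
      (mm_inner_integrable x ((5-mmq)/6) 1)]
  have p1 : ∫ y in (0:ℝ)..((1+mmq)/6), mmg (x, y) = ((1+mmq)/6 - 0) * ((4-mmq)/6) := by
    apply integ_Ioo_const (by linarith)
    intro y hy; obtain ⟨hy0, hy1⟩ := hy
    unfold mmg
    rw [if_pos (Or.inr (Or.inr (Or.inl ⟨by linarith, by linarith, by linarith⟩)))]
  have p2 : ∫ y in ((1+mmq)/6)..((5-mmq)/6), mmg (x, y) = ((5-mmq)/6 - (1+mmq)/6) * (1/3) := by
    apply integ_Ioo_const (by linarith)
    intro y hy; obtain ⟨hy0, hy1⟩ := hy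
    unfold mmg
    rw [if_neg, if_pos (Or.inl ⟨by linarith, by linarith, by linarith⟩)]
    rintro (⟨c1,c2,c3⟩|⟨c1,c2,c3⟩|⟨c1,c2,c3⟩|⟨c1,c2,c3⟩) <;> linarith
  have p3 : ∫ y in ((5-mmq)/6)..(1:ℝ), mmg (x, y) = (1 - (5-mmq)/6) * ((4-mmq)/6) := by
    apply integ_Ioo_const (by linarith)
    intro y hy; obtain ⟨hy0, hy1⟩ := hy
    unfold mmg
    rw [if_pos (Or.inl ⟨by linarith, by linarith, by linarith⟩)]
  rw [p1, p2, p3]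
  unfold mmphi
  rw [if_neg (by linarith : ¬ x ≤ 1/6), if_neg (by linarith : ¬ x ≤ (1+mmq)/6),
    if_neg (by linarith : ¬ x ≤ (5-mmq)/6), if_neg (by linarith : ¬ x ≤ 5/6)]
  ring

lemma mm_outer : ∫ x in Set.Icc (0:ℝ) 1, mmphi x = (6 + mmq)/27 := by
  have h1 := mmq_gt; have h2 := mmq_lt
  have hint : ∀ u v : ℝ, u ∈ Set.Icc (0:ℝ) 1 → v ∈ Set.Icc (0:ℝ) 1 →
      IntervalIntegrable mmphi volume u v := by
    intro u v hu hv
    apply intervalIntegrable_of_bdd mmphi_measurable (M := 10)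
    intro y hy
    refine mmphi_bound y (Set.uIcc_subset_uIcc ?_ ?_ hy) <;>
      rw [Set.uIcc_of_le (by norm_num : (0:ℝ) ≤ 1)] <;> assumption
  have hmem : ∀ c : ℝ, 0 ≤ c → c ≤ 1 → c ∈ Set.Icc (0:ℝ) 1 := fun c h h' => ⟨h, h'⟩
  have m0 := hmem 0 (by norm_num) (by norm_num)
  have m1 := hmem (1/6) (by norm_num) (by norm_num)
  have m2 := hmem ((1+mmq)/6) (by linarith) (by linarith)
  have m3 := hmem ((5-mmq)/6) (by linarith) (by linarith)
  have m4 := hmem (5/6) (by norm_num) (by norm_num)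
  have m5 := hmem 1 (by norm_num) (by norm_num)
  rw [integral_Icc_eq_integral_Ioc, ← intervalIntegral.integral_of_le (by norm_num : (0:ℝ) ≤ 1),
    ← intervalIntegral.integral_add_adjacent_intervals (hint 0 (1/6) m0 m1) (hint (1/6) 1 m1 m5),
    ← intervalIntegral.integral_add_adjacent_intervals (hint (1/6) ((1+mmq)/6) m1 m2)
      (hint ((1+mmq)/6) 1 m2 m5),
    ← intervalIntegral.integral_add_adjacent_intervals (hint ((1+mmq)/6) ((5-mmq)/6) m2 m3)
      (hint ((5-mmq)/6) 1 m3 m5),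
    ← intervalIntegral.integral_add_adjacent_intervals (hint ((5-mmq)/6) (5/6) m3 m4)
      (hint (5/6) 1 m4 m5)]
  have p1 : ∫ x in (0:ℝ)..(1/6:ℝ), mmphi x
      = ((1/6:ℝ) - 0) * ((4 - mmq)/3 * ((1 + mmq)/6) + (4 - 2*mmq)/18) := by
    apply integ_Ioo_const (by norm_num)
    intro y hy; obtain ⟨hy0, hy1⟩ := hy
    unfold mmphi; rw [if_pos (le_of_lt hy1)]
  have p2 : ∫ x in (1/6:ℝ)..((1+mmq)/6), mmphi x
      = ((4 - mmq)/6 * ((2 + mmq)/3)) * ((1+mmq)/6 - 1/6)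
        + (-((4 - mmq)/3)) * (((1+mmq)/6)^2 - (1/6)^2)/2 := by
    apply integ_Ioo_affine (by linarith)
    intro y hy; obtain ⟨hy0, hy1⟩ := hy
    unfold mmphi
    rw [if_neg (by linarith), if_pos (le_of_lt hy1)]
    ring
  have p3 : ∫ x in ((1+mmq)/6)..((5-mmq)/6), mmphi x = ((5-mmq)/6 - (1+mmq)/6) * (1/9) := by
    apply integ_Ioo_const (by linarith)
    intro y hy; obtain ⟨hy0, hy1⟩ := hy
    unfold mmphi
    rw [if_neg (by linarith), if_neg (by linarith), if_pos (le_of_lt hy1)]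
  have p4 : ∫ x in ((5-mmq)/6)..(5/6:ℝ), mmphi x
      = (-((4 - mmq)^2/18)) * (5/6 - (5-mmq)/6)
        + ((4 - mmq)/3) * ((5/6:ℝ)^2 - ((5-mmq)/6)^2)/2 := by
    apply integ_Ioo_affine (by linarith)
    intro y hy; obtain ⟨hy0, hy1⟩ := hy
    unfold mmphi
    rw [if_neg (by linarith), if_neg (by linarith), if_neg (by linarith),
      if_pos (le_of_lt hy1)]
    ring
  have p5 : ∫ x in (5/6:ℝ)..(1:ℝ), mmphi x
      = ((1:ℝ) - 5/6) * ((4 - mmq)/3 * ((1 + mmq)/6) + (4 - 2*mmq)/18) := by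
    apply integ_Ioo_const (by norm_num)
    intro y hy; obtain ⟨hy0, hy1⟩ := hy
    unfold mmphi
    rw [if_neg (by linarith), if_neg (by linarith), if_neg (by linarith),
      if_neg (by linarith)]
  rw [p1, p2, p3, p4, p5]
  linear_combination (-mmq/108) * mmq_sq

set_option maxHeartbeats 4000000 in
theorem stmt_14
    (menu : List ((ℝ × ℝ) × ℝ))
    (hmenu : menu = [((1,0), 5/6), ((0,1), 5/6), ((-1,0), -1/6), ((0,-1), -1/6),
      ((1,1), (10 - Real.sqrt 2)/6), ((-1,-1), (-2 - Real.sqrt 2)/6),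
      ((1,-1), (4 - Real.sqrt 2)/6), ((-1,1), (4 - Real.sqrt 2)/6), ((0,0), 0)])
    (sel : ℝ × ℝ → (ℝ × ℝ) × ℝ)
    (hsel_mem : ∀ x, sel x ∈ menu)
    (hsel_max : ∀ x, ∀ m ∈ menu,
      m.1.1 * x.1 + m.1.2 * x.2 - m.2
        ≤ (sel x).1.1 * x.1 + (sel x).1.2 * x.2 - (sel x).2)
    (hmeas : Measurable sel) :
    ∫ x in Set.Icc ((0:ℝ), (0:ℝ)) (1, 1),
        ((sel x).2 - ((sel x).1.1 * (1/2) + (sel x).1.2 * (1/2)))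
      = (6 + Real.sqrt 2)/27 := by
  rw [show Real.sqrt 2 = mmq from rfl] at hmenu ⊢
  subst hmenu
  have h1 := mmq_gt; have h2 := mmq_lt
  have hforce : ∀ (x : ℝ × ℝ) (m : (ℝ × ℝ) × ℝ),
      m ∈ [((1,0), 5/6), ((0,1), 5/6), ((-1,0), -1/6), ((0,-1), -1/6),
        ((1,1), (10 - mmq)/6), ((-1,-1), (-2 - mmq)/6),
        ((1,-1), (4 - mmq)/6), ((-1,1), (4 - mmq)/6), ((0,0), (0:ℝ))] →
      (∀ m' ∈ [((1,0), 5/6), ((0,1), 5/6), ((-1,0), -1/6), ((0,-1), -1/6),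
        ((1,1), (10 - mmq)/6), ((-1,-1), (-2 - mmq)/6),
        ((1,-1), (4 - mmq)/6), ((-1,1), (4 - mmq)/6), ((0,0), (0:ℝ))], m' ≠ m →
        m'.1.1 * x.1 + m'.1.2 * x.2 - m'.2 < m.1.1 * x.1 + m.1.2 * x.2 - m.2) →
      sel x = m := by
    intro x m hm hstrict
    by_contra hne
    exact absurd (hsel_max x m hm) (not_le.2 (hstrict _ (hsel_mem x) hne))
  have hfg : ∀ p : ℝ × ℝ, p ∈ Set.Icc ((0:ℝ),(0:ℝ)) (1,1) →
      p.1 ≠ 1/6 → p.1 ≠ (1+mmq)/6 → p.1 ≠ (5-mmq)/6 → p.1 ≠ 5/6 →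
      p.2 ≠ 1/6 → p.2 ≠ (1+mmq)/6 → p.2 ≠ (5-mmq)/6 → p.2 ≠ 5/6 →
      p.1 + p.2 ≠ (2+mmq)/6 → p.1 + p.2 ≠ (10-mmq)/6 →
      p.1 - p.2 ≠ (4-mmq)/6 → p.2 - p.1 ≠ (4-mmq)/6 →
      ((sel p).2 - ((sel p).1.1 * (1/2) + (sel p).1.2 * (1/2))) = mmg p := by
    intro p hp z1 z2 z3 z4 z5 z6 z7 z8 z9 z10 z11 z12
    simp only [Set.mem_Icc, Prod.le_def] at hp
    obtain ⟨⟨hx0, hy0⟩, hx1, hy1⟩ := hp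
    unfold mmg
    by_cases hC : ((5 - mmq)/6 ≤ p.1 ∧ (5 - mmq)/6 ≤ p.2 ∧ (10 - mmq)/6 ≤ p.1 + p.2)
       ∨ (p.1 ≤ (1 + mmq)/6 ∧ p.2 ≤ (1 + mmq)/6 ∧ p.1 + p.2 ≤ (2 + mmq)/6)
       ∨ ((5 - mmq)/6 ≤ p.1 ∧ p.2 ≤ (1 + mmq)/6 ∧ (4 - mmq)/6 ≤ p.1 - p.2)
       ∨ (p.1 ≤ (1 + mmq)/6 ∧ (5 - mmq)/6 ≤ p.2 ∧ (4 - mmq)/6 ≤ p.2 - p.1)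
    · rw [if_pos hC]
      rcases hC with ⟨c1,c2,c3⟩|⟨c1,c2,c3⟩|⟨c1,c2,c3⟩|⟨c1,c2,c3⟩
      · have s1 := c1.lt_of_ne (Ne.symm z3)
        have s2 := c2.lt_of_ne (Ne.symm z7)
        have s3 := c3.lt_of_ne (Ne.symm z10)
        have hsel : sel p = ((1,1), (10 - mmq)/6) := by
          apply hforce p _ (by simp)
          intro m' hm' hne
          simp only [List.mem_cons, List.not_mem_nil, or_false] at hm'
          rcases hm' with rfl|rfl|rfl|rfl|rfl|rfl|rfl|rfl|rfl
          all_goals first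
            | exact absurd rfl hne
            | (norm_num; linarith)
        rw [hsel]
        first | (norm_num; ring) | norm_num
      · have s1 := c1.lt_of_ne z2
        have s2 := c2.lt_of_ne z6
        have s3 := c3.lt_of_ne z9
        have hsel : sel p = ((-1,-1), (-2 - mmq)/6) := by
          apply hforce p _ (by simp)
          intro m' hm' hne
          simp only [List.mem_cons, List.not_mem_nil, or_false] at hm'
          rcases hm' with rfl|rfl|rfl|rfl|rfl|rfl|rfl|rfl|rfl
          all_goals first
            | exact absurd rfl hne
            | (norm_num; linarith)
        rw [hsel]
        first | (norm_num; ring) | norm_num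
      · have s1 := c1.lt_of_ne (Ne.symm z3)
        have s2 := c2.lt_of_ne z6
        have s3 := c3.lt_of_ne (Ne.symm z11)
        have hsel : sel p = ((1,-1), (4 - mmq)/6) := by
          apply hforce p _ (by simp)
          intro m' hm' hne
          simp only [List.mem_cons, List.not_mem_nil, or_false] at hm'
          rcases hm' with rfl|rfl|rfl|rfl|rfl|rfl|rfl|rfl|rfl
          all_goals first
            | exact absurd rfl hne
            | (norm_num; linarith)
        rw [hsel]
        first | (norm_num; ring) | norm_num
      · have s1 := c1.lt_of_ne z2
        have s2 := c2.lt_of_ne (Ne.symm z7)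
        have s3 := c3.lt_of_ne (Ne.symm z12)
        have hsel : sel p = ((-1,1), (4 - mmq)/6) := by
          apply hforce p _ (by simp)
          intro m' hm' hne
          simp only [List.mem_cons, List.not_mem_nil, or_false] at hm'
          rcases hm' with rfl|rfl|rfl|rfl|rfl|rfl|rfl|rfl|rfl
          all_goals first
            | exact absurd rfl hne
            | (norm_num; linarith)
        rw [hsel]
        first | (norm_num; ring) | norm_num
    · rw [if_neg hC]
      push_neg at hC
      obtain ⟨n5, n6, n7, n8⟩ := hC
      by_cases hD : (5/6 ≤ p.1 ∧ (1 + mmq)/6 ≤ p.2 ∧ p.2 ≤ (5 - mmq)/6)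
         ∨ (5/6 ≤ p.2 ∧ (1 + mmq)/6 ≤ p.1 ∧ p.1 ≤ (5 - mmq)/6)
         ∨ (p.1 ≤ 1/6 ∧ (1 + mmq)/6 ≤ p.2 ∧ p.2 ≤ (5 - mmq)/6)
         ∨ (p.2 ≤ 1/6 ∧ (1 + mmq)/6 ≤ p.1 ∧ p.1 ≤ (5 - mmq)/6)
      · rw [if_pos hD]
        rcases hD with ⟨c1,c2,c3⟩|⟨c1,c2,c3⟩|⟨c1,c2,c3⟩|⟨c1,c2,c3⟩
        · have s1 := c1.lt_of_ne (Ne.symm z4)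
          have s2 := c2.lt_of_ne (Ne.symm z6)
          have s3 := c3.lt_of_ne z7
          have hsel : sel p = ((1,0), 5/6) := by
            apply hforce p _ (by simp)
            intro m' hm' hne
            simp only [List.mem_cons, List.not_mem_nil, or_false] at hm'
            rcases hm' with rfl|rfl|rfl|rfl|rfl|rfl|rfl|rfl|rfl
            all_goals first
              | exact absurd rfl hne
              | (norm_num; linarith)
          rw [hsel]
          first | (norm_num; ring) | norm_num
        · have s1 := c1.lt_of_ne (Ne.symm z8)
          have s2 := c2.lt_of_ne (Ne.symm z2)
          have s3 := c3.lt_of_ne z3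
          have hsel : sel p = ((0,1), 5/6) := by
            apply hforce p _ (by simp)
            intro m' hm' hne
            simp only [List.mem_cons, List.not_mem_nil, or_false] at hm'
            rcases hm' with rfl|rfl|rfl|rfl|rfl|rfl|rfl|rfl|rfl
            all_goals first
              | exact absurd rfl hne
              | (norm_num; linarith)
          rw [hsel]
          first | (norm_num; ring) | norm_num
        · have s1 := c1.lt_of_ne z1
          have s2 := c2.lt_of_ne (Ne.symm z6)
          have s3 := c3.lt_of_ne z7
          have hsel : sel p = ((-1,0), -1/6) := by
            apply hforce p _ (by simp)
            intro m' hm' hne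
            simp only [List.mem_cons, List.not_mem_nil, or_false] at hm'
            rcases hm' with rfl|rfl|rfl|rfl|rfl|rfl|rfl|rfl|rfl
            all_goals first
              | exact absurd rfl hne
              | (norm_num; linarith)
          rw [hsel]
          first | (norm_num; ring) | norm_num
        · have s1 := c1.lt_of_ne z5
          have s2 := c2.lt_of_ne (Ne.symm z2)
          have s3 := c3.lt_of_ne z3
          have hsel : sel p = ((0,-1), -1/6) := by
            apply hforce p _ (by simp)
            intro m' hm' hne
            simp only [List.mem_cons, List.not_mem_nil, or_false] at hm'
            rcases hm' with rfl|rfl|rfl|rfl|rfl|rfl|rfl|rfl|rfl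
            all_goals first
              | exact absurd rfl hne
              | (norm_num; linarith)
          rw [hsel]
          first | (norm_num; ring) | norm_num
      · rw [if_neg hD]
        push_neg at hD
        obtain ⟨n1, n2, n3, n4⟩ := hD
        have g1 : p.1 < 5/6 := by
          by_contra hcon; push_neg at hcon
          rcases le_or_gt p.2 ((1+mmq)/6) with h | h
          · have := n7 (by linarith) h; linarith
          · have hb := n1 hcon (le_of_lt h)
            have := n5 (by linarith) (by linarith); linarith
        have g2 : p.2 < 5/6 := by
          by_contra hcon; push_neg at hcon
          rcases le_or_gt p.1 ((1+mmq)/6) with h | h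
          · have := n8 h (by linarith); linarith
          · have hb := n2 hcon (le_of_lt h)
            have := n5 (by linarith) (by linarith); linarith
        have g3 : 1/6 < p.1 := by
          by_contra hcon; push_neg at hcon
          rcases le_or_gt p.2 ((1+mmq)/6) with h | h
          · have := n6 (by linarith) h; linarith
          · rcases le_or_gt p.2 ((5-mmq)/6) with h' | h'
            · have := n3 hcon (le_of_lt h); linarith
            · have := n8 (by linarith) (le_of_lt h'); linarith
        have g4 : 1/6 < p.2 := by
          by_contra hcon; push_neg at hcon
          rcases le_or_gt p.1 ((1+mmq)/6) with h | h
          · have := n6 h (by linarith); linarith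
          · rcases le_or_gt p.1 ((5-mmq)/6) with h' | h'
            · have := n4 hcon (le_of_lt h); linarith
            · have := n7 (le_of_lt h') (by linarith); linarith
        have g5 : p.1 + p.2 < (10-mmq)/6 := by
          by_contra hcon; push_neg at hcon
          rcases lt_or_ge p.1 ((5-mmq)/6) with h | h
          · have := n2 (by linarith) (by linarith); linarith
          · rcases lt_or_ge p.2 ((5-mmq)/6) with h' | h'
            · have := n1 (by linarith) (by linarith); linarith
            · have := n5 h h'; linarith
        have g6 : (2+mmq)/6 < p.1 + p.2 := by
          by_contra hcon; push_neg at hcon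
          rcases le_or_gt p.1 ((1+mmq)/6) with h | h
          · rcases le_or_gt p.2 ((1+mmq)/6) with h' | h'
            · have := n6 h h'; linarith
            · have := n3 (by linarith) (le_of_lt h'); linarith
          · have := n4 (by linarith) (le_of_lt h); linarith
        have g7 : p.1 - p.2 < (4-mmq)/6 := by
          by_contra hcon; push_neg at hcon
          rcases le_or_gt p.1 ((5-mmq)/6) with h | h
          · have := n4 (by linarith) (by linarith); linarith
          · rcases le_or_gt p.2 ((1+mmq)/6) with h' | h'
            · have := n7 (le_of_lt h) h'; linarith
            · have := n1 (by linarith) (le_of_lt h'); linarith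
        have g8 : p.2 - p.1 < (4-mmq)/6 := by
          by_contra hcon; push_neg at hcon
          rcases le_or_gt p.2 ((5-mmq)/6) with h | h
          · have := n3 (by linarith) (by linarith); linarith
          · rcases le_or_gt p.1 ((1+mmq)/6) with h' | h'
            · have := n8 h' (le_of_lt h); linarith
            · have := n2 (by linarith) (le_of_lt h'); linarith
        have hsel : sel p = ((0,0), 0) := by
          apply hforce p _ (by simp)
          intro m' hm' hne
          simp only [List.mem_cons, List.not_mem_nil, or_false] at hm'
          rcases hm' with rfl|rfl|rfl|rfl|rfl|rfl|rfl|rfl|rfl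
          all_goals first
            | exact absurd rfl hne
            | (norm_num; linarith)
        rw [hsel]
        first | (norm_num; ring) | norm_num
  have hae : ∀ᵐ p : ℝ × ℝ, p ∈ Set.Icc ((0:ℝ),(0:ℝ)) (1,1) →
      ((sel p).2 - ((sel p).1.1 * (1/2) + (sel p).1.2 * (1/2))) = mmg p := by
    have hZ : volume ({p : ℝ × ℝ | p.1 = 1/6} ∪ ({p | p.1 = (1+mmq)/6} ∪ ({p | p.1 = (5-mmq)/6}
        ∪ ({p | p.1 = 5/6} ∪ ({p | p.2 = 1/6} ∪ ({p | p.2 = (1+mmq)/6} ∪ ({p | p.2 = (5-mmq)/6}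
        ∪ ({p | p.2 = 5/6} ∪ ({p | p.1 + p.2 = (2+mmq)/6} ∪ ({p | p.1 + p.2 = (10-mmq)/6}
        ∪ ({p | p.1 - p.2 = (4-mmq)/6} ∪ {p | p.2 - p.1 = (4-mmq)/6}))))))))))) = 0 :=
      measure_union_null (line_vert_null _) (measure_union_null (line_vert_null _)
        (measure_union_null (line_vert_null _) (measure_union_null (line_vert_null _)
        (measure_union_null (line_horiz_null _) (measure_union_null (line_horiz_null _)
        (measure_union_null (line_horiz_null _) (measure_union_null (line_horiz_null _)
        (measure_union_null (line_sum_null _) (measure_union_null (line_sum_null _)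
        (measure_union_null (line_diff_null _) (line_diff2_null _)))))))))))
    rw [ae_iff]
    refine measure_mono_null (fun p hp => ?_) hZ
    simp only [Set.mem_setOf_eq] at hp
    by_contra hpZ
    simp only [Set.mem_union, Set.mem_setOf_eq, not_or] at hpZ
    obtain ⟨z1, z2, z3, z4, z5, z6, z7, z8, z9, z10, z11, z12⟩ := hpZ
    push_neg at hp
    exact hp.2 (hfg p hp.1 z1 z2 z3 z4 z5 z6 z7 z8 z9 z10 z11 z12)
  rw [setIntegral_congr_ae measurableSet_Icc hae]
  rw [Set.Icc_prod_eq, Measure.volume_eq_prod]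
  have hInt : IntegrableOn mmg (Set.Icc (0:ℝ) 1 ×ˢ Set.Icc (0:ℝ) 1) (volume.prod volume) := by
    apply Measure.integrableOn_of_bounded (M := 1)
    · rw [Measure.prod_prod]
      simp [Real.volume_Icc]
    · exact mmg_measurable.aestronglyMeasurable
    · exact ae_of_all _ fun p => by rw [Real.norm_eq_abs]; exact mmg_bound p
  rw [setIntegral_prod mmg hInt]
  have hinner : ∀ᵐ x : ℝ, x ∈ Set.Icc (0:ℝ) 1 →
      (∫ y in Set.Icc (0:ℝ) 1, mmg (x, y)) = mmphi x := by
    have hfin : volume ({0, 1/6, (1+mmq)/6, (5-mmq)/6, 5/6, 1} : Set ℝ) = 0 :=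
      (Set.toFinite _).measure_zero _
    rw [ae_iff]
    refine measure_mono_null (fun x hx => ?_) hfin
    simp only [Set.mem_setOf_eq] at hx
    by_contra hxF
    simp only [Set.mem_insert_iff, Set.mem_singleton_iff, not_or] at hxF
    obtain ⟨e0, e1, e2, e3, e4, e5⟩ := hxF
    push_neg at hx
    obtain ⟨hmem, hne⟩ := hx
    rw [Set.mem_Icc] at hmem
    obtain ⟨hx0, hx1⟩ := hmem
    apply hne
    rcases lt_or_ge x (1/6) with h | h
    · exact inner1 x (hx0.lt_of_ne (Ne.symm e0)) h
    · rcases lt_or_ge x ((1+mmq)/6) with h' | h'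
      · exact inner2 x (h.lt_of_ne (Ne.symm e1)) h'
      · rcases lt_or_ge x ((5-mmq)/6) with h'' | h''
        · exact inner3 x (h'.lt_of_ne (Ne.symm e2)) h''
        · rcases lt_or_ge x (5/6) with h3 | h3
          · exact inner4 x (h''.lt_of_ne (Ne.symm e3)) h3
          · exact inner5 x (h3.lt_of_ne (Ne.symm e4)) (hx1.lt_of_ne e5)
  rw [setIntegral_congr_ae measurableSet_Icc hinner]
  exact mm_outer
end

section
/- A function u : X → ℝ is convex if and only if the direct-revelation mechanism it induces is strategyproof: that is, if u(x) = sup_{x'} (a(x')·x − p(x')) with a(x) ∈ ∂u(x) and p(x) = a(x)·x − u(x), then for all x, x': a(x')·x − p(x') ≤ u(x); conversely, any u arising as u(x) = a(x)·x − p(x) for a mechanism satisfying a(x')·x − p(x') ≤ u(x) for all x, x' is convex. -/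
theorem stmt_15 (d : ℕ) (X : Set (Fin d → ℝ)) (hX : Convex ℝ X)
    (u : (Fin d → ℝ) → ℝ) (a : (Fin d → ℝ) → (Fin d → ℝ)) (p : (Fin d → ℝ) → ℝ) :
    ((ConvexOn ℝ X u ∧
        (∀ x ∈ X, ∀ y ∈ X, u x + ∑ i, a x i * (y i - x i) ≤ u y) ∧
        (∀ x ∈ X, p x = (∑ i, a x i * x i) - u x)) →
      ∀ x ∈ X, ∀ x' ∈ X, (∑ i, a x' i * x i) - p x' ≤ u x) ∧
    (((∀ x ∈ X, u x = (∑ i, a x i * x i) - p x) ∧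
        (∀ x ∈ X, ∀ x' ∈ X, (∑ i, a x' i * x i) - p x' ≤ u x)) →
      ConvexOn ℝ X u) := by
  constructor
  · rintro ⟨-, hsub, hp⟩ x hx x' hx'
    have h := hsub x' hx' x hx
    rw [hp x' hx']
    have : ∑ i, a x' i * (x i - x' i) = (∑ i, a x' i * x i) - ∑ i, a x' i * x' i := by
      rw [← Finset.sum_sub_distrib]; congr 1; ext i; ring
    linarith [this ▸ h]
  · rintro ⟨heq, hsp⟩
    refine ⟨hX, fun x hx y hy s t hs ht hst => ?_⟩
    have hz : s • x + t • y ∈ X := hX hx hy hs ht hst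
    set z := s • x + t • y with hzdef
    have h1 := hsp x hx z hz
    have h2 := hsp y hy z hz
    have h3 := heq z hz
    have hzsum : ∑ i, a z i * z i = s * (∑ i, a z i * x i) + t * (∑ i, a z i * y i) := by
      rw [Finset.mul_sum, Finset.mul_sum, ← Finset.sum_add_distrib]
      refine Finset.sum_congr rfl fun i _ => ?_
      simp [hzdef]; ring
    have : u z = s * ((∑ i, a z i * x i) - p z) + t * ((∑ i, a z i * y i) - p z) := by
      rw [h3, hzsum]; linear_combination (p z) * hst
    rw [this]
    have := mul_le_mul_of_nonneg_left h1 hs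
    have := mul_le_mul_of_nonneg_left h2 ht
    simp only [smul_eq_mul]
    nlinarith
end
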